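/- arXiv:2203.01845 — 3 statements merged into one kernel-verified Lean document; each statement's English description precedes it below -/
import Mathlib

section
/- For any integrable function f : T_ref → ℝ on the reference triangle, the change of variables via the Duffy transform gives ∫_{T_ref} f(x) dx = ∫_0^1 ∫_0^1 f(s, t(1−s)) (1−s) dt ds. -/
/-! Fubini slices the triangle into the vertical segments `{s} × [0, 1 - s]`, `0 ≤ s ≤ 1`;
rescaling each segment to `[0, 1]` by `y = t (1 - s)` produces the Jacobian factor `1 - s`. -/

open MeasureTheory Set

theorem setIntegral_prod_eq_integral_setIntegral_preimage_mk {α β E : Type*}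
    [MeasurableSpace α] [MeasurableSpace β] [NormedAddCommGroup E] [NormedSpace ℝ E]
    {μ : Measure α} {ν : Measure β} [SFinite μ] [SFinite ν]
    {S : Set (α × β)} (hS : MeasurableSet S) {f : α × β → E}
    (hf : IntegrableOn f S (μ.prod ν)) :
    ∫ z in S, f z ∂μ.prod ν = ∫ x, ∫ y in Prod.mk x ⁻¹' S, f (x, y) ∂ν ∂μ := by
  rw [← integral_indicator hS, integral_prod _ ((integrable_indicator_iff hS).2 hf)]
  congr 1 with x
  rw [← integral_indicator (measurable_prodMk_left hS)]
  rfl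

theorem setIntegral_Icc_zero_eq_setIntegral_Icc_zero_one_comp_mul {E : Type*}
    [NormedAddCommGroup E] [NormedSpace ℝ E] (g : ℝ → E) {c : ℝ} (hc : 0 ≤ c) :
    ∫ y in Icc 0 c, g y = ∫ t in Icc (0 : ℝ) 1, c • g (t * c) := by
  rw [integral_Icc_eq_integral_Ioc, ← intervalIntegral.integral_of_le hc,
    integral_Icc_eq_integral_Ioc, ← intervalIntegral.integral_of_le zero_le_one,
    intervalIntegral.integral_smul, intervalIntegral.smul_integral_comp_mul_right, zero_mul,
    one_mul]

def refTriangle : Set (ℝ × ℝ) := {x | 0 ≤ x.1 ∧ 0 ≤ x.2 ∧ x.1 + x.2 ≤ 1}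

theorem measurableSet_refTriangle : MeasurableSet refTriangle :=
  (measurableSet_le measurable_const measurable_fst).inter <|
    (measurableSet_le measurable_const measurable_snd).inter <|
      measurableSet_le (measurable_fst.add measurable_snd) measurable_const

theorem preimage_mk_refTriangle_of_mem {s : ℝ} (hs : s ∈ Icc (0 : ℝ) 1) :
    Prod.mk s ⁻¹' refTriangle = Icc 0 (1 - s) := by
  ext y
  simp only [refTriangle, mem_preimage, mem_ofPred_eq, mem_Icc]
  constructor
  · rintro ⟨-, hy, hsy⟩
    exact ⟨hy, by linarith⟩
  · rintro ⟨hy, hsy⟩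
    exact ⟨hs.1, hy, by linarith⟩

theorem preimage_mk_refTriangle_of_notMem {s : ℝ} (hs : s ∉ Icc (0 : ℝ) 1) :
    Prod.mk s ⁻¹' refTriangle = ∅ := by
  refine eq_empty_of_forall_notMem fun y ⟨hs₀, hy, hsy⟩ => hs ⟨hs₀, ?_⟩
  linarith

theorem setIntegral_refTriangle {E : Type*} [NormedAddCommGroup E] [NormedSpace ℝ E]
    {f : ℝ × ℝ → E} (hf : IntegrableOn f refTriangle) :
    ∫ x in refTriangle, f x = ∫ s in Icc (0 : ℝ) 1, ∫ y in Icc 0 (1 - s), f (s, y) := by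
  rw [Measure.volume_eq_prod] at hf ⊢
  rw [setIntegral_prod_eq_integral_setIntegral_preimage_mk measurableSet_refTriangle hf,
    ← setIntegral_eq_integral_of_forall_compl_eq_zero fun s hs => by
      rw [preimage_mk_refTriangle_of_notMem hs, Measure.restrict_empty, integral_zero_measure]]
  refine setIntegral_congr_fun measurableSet_Icc fun s hs => ?_
  rw [preimage_mk_refTriangle_of_mem hs]

theorem duffy_change_of_variables (f : ℝ × ℝ → ℝ)
    (hf : IntegrableOn f {x : ℝ × ℝ | 0 ≤ x.1 ∧ 0 ≤ x.2 ∧ x.1 + x.2 ≤ 1}) :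
    ∫ x in {x : ℝ × ℝ | 0 ≤ x.1 ∧ 0 ≤ x.2 ∧ x.1 + x.2 ≤ 1}, f x
      = ∫ s in Set.Icc (0:ℝ) 1, ∫ t in Set.Icc (0:ℝ) 1, f (s, t * (1 - s)) * (1 - s) := by
  rw [← refTriangle, setIntegral_refTriangle hf]
  refine setIntegral_congr_fun measurableSet_Icc fun s hs => ?_
  rw [setIntegral_Icc_zero_eq_setIntegral_Icc_zero_one_comp_mul _ (sub_nonneg.2 hs.2)]
  simp only [smul_eq_mul, mul_comm]
end

section
/- Let η : T → [0,∞) be refinement indicators on a finite set T, θ ∈ (0,1], and sort T so that η(T_1) ≥ η(T_2) ≥ ... ≥ η(T_n). Let m be the smallest index with θ Σ_{i=1}^n η(T_i)² ≤ Σ_{i=1}^m η(T_i)². Then M = {T_1, ..., T_m} has minimal cardinality among all subsets satisfying the Dörfler criterion. -/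
/-!
The first `k` terms of a nonincreasing sequence have the largest sum among any `k` of its
terms (if `n ∈ s`, drop it and compare `f n` with `f #(s.erase n)`, using `#(s.erase n) ≤ n`).
So a Dörfler-admissible set of size `k < m` would make the first `k` indicators admissible,
against the minimality of `m`.
-/

open Finset

theorem sum_le_sum_range_card_of_antitoneOn {M : Type*} [AddCommMonoid M] [PartialOrder M]
    [IsOrderedAddMonoid M] {f : ℕ → M} {n : ℕ} (hf : AntitoneOn f (Set.Iio n))
    {s : Finset ℕ} (hs : s ⊆ range n) : ∑ i ∈ s, f i ≤ ∑ i ∈ range #s, f i := by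
  induction n generalizing s with
  | zero => simp_all
  | succ n ih =>
    have hf' : AntitoneOn f (Set.Iio n) := hf.mono (Set.Iio_subset_Iio n.le_succ)
    have ht : s.erase n ⊆ range n := fun i hi => by
      have := hs (mem_of_mem_erase hi)
      simp only [mem_range] at this ⊢
      exact lt_of_le_of_ne (Nat.lt_succ_iff.mp this) (ne_of_mem_erase hi)
    by_cases hn : n ∈ s
    · have hcard : #(s.erase n) ≤ n := by simpa using card_le_card ht
      calc ∑ i ∈ s, f i = f n + ∑ i ∈ s.erase n, f i := (add_sum_erase s f hn).symm
        _ ≤ f #(s.erase n) + ∑ i ∈ range #(s.erase n), f i :=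
          add_le_add (hf (by simp only [Set.mem_Iio]; omega) (by simp) hcard) (ih hf' ht)
        _ = ∑ i ∈ range #s, f i := by
          rw [← card_erase_add_one hn, sum_range_succ, add_comm]
    · simpa [erase_eq_of_notMem hn] using ih hf' ht

theorem doerfler_greedy_is_minimal_general (n m : ℕ) (η : ℕ → ℝ) (hη : ∀ i, 0 ≤ η i)
    (hsort : ∀ i j, i ≤ j → j < n → η j ≤ η i)
    (θ : ℝ)
    (hmin : ∀ k < m, ¬ (θ * ∑ i ∈ range n, η i ^ 2 ≤ ∑ i ∈ range k, η i ^ 2)) :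
    ∀ M' ⊆ range n, (θ * ∑ i ∈ range n, η i ^ 2 ≤ ∑ i ∈ M', η i ^ 2) → m ≤ M'.card := by
  intro M' hM' hcrit
  have hsq : AntitoneOn (fun i => η i ^ 2) (Set.Iio n) := fun i _ j hj hij =>
    pow_le_pow_left₀ (hη j) (hsort i j hij hj) 2
  by_contra! hcard
  exact hmin #M' hcard (hcrit.trans (sum_le_sum_range_card_of_antitoneOn hsq hM'))

theorem doerfler_greedy_is_minimal (n m : ℕ) (η : ℕ → ℝ) (hη : ∀ i, 0 ≤ η i)
    (hsort : ∀ i j, i ≤ j → j < n → η j ≤ η i)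
    (θ : ℝ) (hθ : θ ∈ Set.Ioc (0:ℝ) 1) (hmn : m ≤ n)
    (hm : θ * ∑ i ∈ range n, η i ^ 2 ≤ ∑ i ∈ range m, η i ^ 2)
    (hmin : ∀ k < m, ¬ (θ * ∑ i ∈ range n, η i ^ 2 ≤ ∑ i ∈ range k, η i ^ 2)) :
    ∀ M' ⊆ range n, (θ * ∑ i ∈ range n, η i ^ 2 ≤ ∑ i ∈ M', η i ^ 2) → m ≤ M'.card :=
  doerfler_greedy_is_minimal_general n m η hη hsort θ hmin
end

section
/- The scalar nonlinearity μ(t) = 1 + exp(−t) satisfies: the induced vector field Φ(p) = μ(|p|²) p on ℝ² is Lipschitz continuous, and if additionally 0 < μ(t) + 2tμ'(t) holds for all t ≥ 0 (which is true for this μ, since μ(t) + 2tμ'(t) = 1 + (1 − 2t)e^{−t} > 0 for all t ≥ 0), then Φ is strongly monotone: (Φ(p) − Φ(q)) · (p − q) ≥ c|p − q|² for some c > 0 and all p, q ∈ ℝ². -/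
open scoped RealInnerProductSpace

/-- The vector field `Φ(p) = μ(|p|²) p` with `μ(t) = 1 + exp(-t)`. -/
noncomputable def PhiNL (p : EuclideanSpace ℝ (Fin 2)) : EuclideanSpace ℝ (Fin 2) :=
  (1 + Real.exp (-(‖p‖ ^ 2))) • p

/-!
Along the segment `s ↦ x = q + s • h`, `h = p - q`, the field `Φ(x) = μ(‖x‖²) • x` has
derivative `μ(t) • h + 2 μ'(t) ⟪x, h⟫ • x` with `t = ‖x‖²`. Its norm is at most
`(|μ t| + 2 t |μ' t|) ‖h‖`, and by Cauchy–Schwarz its inner product with `h` is at least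
`min (μ t) (μ t + 2 t μ' t) * ‖h‖²`; the mean value theorem turns these pointwise bounds into
the Lipschitz and strong monotonicity estimates.
For `μ t = 1 + exp (-t)` both bounds come from `x + 1 ≤ exp x` in the form
`(t - a + 1) exp (-t) ≤ exp (-a)`, with `a = 1` and `a = 3/2`; the latter gives
`μ t + 2 t μ' t ≥ 1 - 2 exp (-3/2) > 0`.
-/

section RadialField

variable {E : Type*} [NormedAddCommGroup E] [InnerProductSpace ℝ E]

noncomputable def radialField (μ : ℝ → ℝ) (p : E) : E := μ (‖p‖ ^ 2) • p

variable {μ μ' : ℝ → ℝ}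

theorem hasDerivAt_radialField_line (hμ : ∀ t, 0 ≤ t → HasDerivAt μ (μ' t) t) (q v : E) (s : ℝ) :
    HasDerivAt (fun s => radialField μ (q + s • v))
      (μ (‖q + s • v‖ ^ 2) • v + (2 * μ' (‖q + s • v‖ ^ 2) * ⟪q + s • v, v⟫) • (q + s • v)) s := by
  have hline : HasDerivAt (fun s : ℝ => q + s • v) v s := by
    simpa using ((hasDerivAt_id s).smul_const v).const_add q
  have h := ((hμ (‖q + s • v‖ ^ 2) (sq_nonneg _)).comp s hline.norm_sq).smul hline
  exact h.congr_deriv (by simp only [Function.comp_apply]; congr 2; ring)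

theorem norm_radialField_deriv_le (x v : E) :
    ‖μ (‖x‖ ^ 2) • v + (2 * μ' (‖x‖ ^ 2) * ⟪x, v⟫) • x‖
      ≤ (|μ (‖x‖ ^ 2)| + 2 * ‖x‖ ^ 2 * |μ' (‖x‖ ^ 2)|) * ‖v‖ := by
  have hinner : |⟪x, v⟫| ≤ ‖x‖ * ‖v‖ := abs_real_inner_le_norm x v
  calc _ ≤ ‖μ (‖x‖ ^ 2) • v‖ + ‖(2 * μ' (‖x‖ ^ 2) * ⟪x, v⟫) • x‖ := norm_add_le _ _
    _ = |μ (‖x‖ ^ 2)| * ‖v‖ + 2 * |μ' (‖x‖ ^ 2)| * |⟪x, v⟫| * ‖x‖ := by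
      simp only [norm_smul, Real.norm_eq_abs, abs_mul, abs_two]
    _ ≤ |μ (‖x‖ ^ 2)| * ‖v‖ + 2 * |μ' (‖x‖ ^ 2)| * (‖x‖ * ‖v‖) * ‖x‖ := by gcongr
    _ = _ := by ring

theorem le_inner_radialField_deriv {c : ℝ} (x v : E) (h₁ : c ≤ μ (‖x‖ ^ 2))
    (h₂ : c ≤ μ (‖x‖ ^ 2) + 2 * ‖x‖ ^ 2 * μ' (‖x‖ ^ 2)) :
    c * ‖v‖ ^ 2 ≤ ⟪μ (‖x‖ ^ 2) • v + (2 * μ' (‖x‖ ^ 2) * ⟪x, v⟫) • x, v⟫ := by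
  rw [inner_add_left, real_inner_smul_left, real_inner_smul_left, real_inner_self_eq_norm_sq]
  have hCS : ⟪x, v⟫ ^ 2 ≤ ‖x‖ ^ 2 * ‖v‖ ^ 2 := by
    rw [← mul_pow, ← sq_abs]
    exact pow_le_pow_left₀ (abs_nonneg _) (abs_real_inner_le_norm x v) 2
  rcases le_total 0 (μ' (‖x‖ ^ 2)) with hμ' | hμ'
  · nlinarith [mul_le_mul_of_nonneg_right h₁ (sq_nonneg ‖v‖), mul_nonneg hμ' (sq_nonneg ⟪x, v⟫)]
  · nlinarith [mul_le_mul_of_nonneg_right h₂ (sq_nonneg ‖v‖), mul_le_mul_of_nonpos_left hCS hμ']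

theorem norm_radialField_sub_le {L : ℝ} (hμ : ∀ t, 0 ≤ t → HasDerivAt μ (μ' t) t)
    (hL : ∀ t, 0 ≤ t → |μ t| + 2 * t * |μ' t| ≤ L) (p q : E) :
    ‖radialField μ p - radialField μ q‖ ≤ L * ‖p - q‖ := by
  have h := norm_image_sub_le_of_norm_deriv_le_segment_01'
    (fun s _ => (hasDerivAt_radialField_line hμ q (p - q) s).hasDerivWithinAt)
    (fun s _ => (norm_radialField_deriv_le _ _).trans
      (mul_le_mul_of_nonneg_right (hL _ (sq_nonneg _)) (norm_nonneg _)))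
  simpa using h

theorem mul_norm_sub_sq_le_inner_radialField_sub {c : ℝ}
    (hμ : ∀ t, 0 ≤ t → HasDerivAt μ (μ' t) t) (hc₁ : ∀ t, 0 ≤ t → c ≤ μ t)
    (hc₂ : ∀ t, 0 ≤ t → c ≤ μ t + 2 * t * μ' t) (p q : E) :
    c * ‖p - q‖ ^ 2 ≤ ⟪radialField μ p - radialField μ q, p - q⟫ := by
  have hg (s : ℝ) :=
    (hasDerivAt_radialField_line hμ q (p - q) s).inner ℝ (hasDerivAt_const s (p - q))
  obtain ⟨ξ, -, hξ⟩ := exists_hasDerivAt_eq_slope _ _ zero_lt_one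
    (fun s _ => (hg s).continuousAt.continuousWithinAt) (fun s _ => hg s)
  have := le_inner_radialField_deriv (q + ξ • (p - q)) (p - q)
    (hc₁ _ (sq_nonneg _)) (hc₂ _ (sq_nonneg _))
  simp only [inner_zero_right, zero_add] at hξ
  rw [hξ] at this
  simpa [inner_sub_left] using this

end RadialField

namespace Real

theorem sub_add_one_mul_exp_neg_le (a t : ℝ) : (t - a + 1) * exp (-t) ≤ exp (-a) := by
  calc (t - a + 1) * exp (-t) ≤ exp (t - a) * exp (-t) :=
        mul_le_mul_of_nonneg_right (add_one_le_exp _) (exp_pos _).le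
    _ = exp (-a) := by rw [← exp_add]; ring_nf

theorem two_mul_exp_neg_three_halves_lt_one : 2 * exp (-(3 / 2)) < 1 := by
  have h : 3 / 2 + 1 ≤ exp (3 / 2) := add_one_le_exp _
  have h1 : exp (3 / 2) * exp (-(3 / 2)) = 1 := by rw [← exp_add]; simp
  nlinarith [exp_pos (-(3 / 2))]

theorem one_sub_two_mul_exp_neg_three_halves_le (t : ℝ) :
    1 - 2 * exp (-(3 / 2)) ≤ 1 + (1 - 2 * t) * exp (-t) := by
  nlinarith [sub_add_one_mul_exp_neg_le (3 / 2) t]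

theorem hasDerivAt_one_add_exp_neg (t : ℝ) :
    HasDerivAt (fun t => 1 + exp (-t)) (-exp (-t)) t := by
  simpa using ((hasDerivAt_exp (-t)).comp t (hasDerivAt_neg t)).const_add 1

end Real

theorem phiNL_lipschitz_and_strongly_monotone :
    (∃ L > (0:ℝ), ∀ p q : EuclideanSpace ℝ (Fin 2), ‖PhiNL p - PhiNL q‖ ≤ L * ‖p - q‖)
    ∧ (∀ t : ℝ, 0 ≤ t → 0 < 1 + (1 - 2 * t) * Real.exp (-t))
    ∧ (∃ c > (0:ℝ), ∀ p q : EuclideanSpace ℝ (Fin 2),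
        c * ‖p - q‖ ^ 2 ≤ ⟪PhiNL p - PhiNL q, p - q⟫) := by
  have hΦ : PhiNL = radialField fun t => 1 + Real.exp (-t) := rfl
  have hμ (t : ℝ) (_ : 0 ≤ t) := Real.hasDerivAt_one_add_exp_neg t
  rw [hΦ]
  have hc : 0 < 1 - 2 * Real.exp (-(3 / 2)) := sub_pos.2 Real.two_mul_exp_neg_three_halves_lt_one
  refine ⟨⟨2 + 2 * Real.exp (-1), by positivity, norm_radialField_sub_le hμ fun t ht => ?_⟩,
    fun t _ => hc.trans_le (Real.one_sub_two_mul_exp_neg_three_halves_le t),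
    ⟨_, hc, mul_norm_sub_sq_le_inner_radialField_sub hμ (fun t _ => ?_) (fun t _ => ?_)⟩⟩
  · have h1 : Real.exp (-t) ≤ 1 := Real.exp_le_one_iff.2 (by linarith)
    have h2 := Real.sub_add_one_mul_exp_neg_le 1 t
    rw [abs_of_pos (by positivity), abs_neg, abs_of_pos (Real.exp_pos _)]
    nlinarith
  · linarith [Real.exp_pos (-t), Real.exp_pos (-(3 / 2))]
  · linarith [Real.one_sub_two_mul_exp_neg_three_halves_le t]
end
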